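/- Let n ≥ 2 and, for x ∈ ℝⁿ with xₙ ≠ 0, define P₁(x),…,P_{n−1}(x) by: R(x) = exp(−(x_{n−1}/xₙ)X)·x, Qᵣ(x) = the r-th coordinate of R(x), Pᵣ(x) = xₙ^{n−r−1}·Qᵣ(x) for 1 ≤ r ≤ n−2, and P_{n−1}(x) = xₙ. Then for every polynomial p ∈ ℝ[x₁,…,xₙ] with p(exp(tX)·x) = p(x) for all t ∈ ℝ and x ∈ ℝⁿ, there exist a natural number k and a polynomial F in n−1 variables over ℝ such that xₙᵏ · p(x) = F(P₁(x),…,P_{n−1}(x)) for all x ∈ ℝⁿ with xₙ ≠ 0. -/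

import Mathlib

open Matrix

/-- The regular nilpotent Jordan block: `X_{i,i+1} = 1`, all other entries `0`. -/
noncomputable def jordanX (n : ℕ) : Matrix (Fin n) (Fin n) ℝ :=
  Matrix.of fun i j => if (i : ℕ) + 1 = (j : ℕ) then 1 else 0

/-- The action of the one-parameter unipotent group `{exp(tX) : t ∈ ℝ}` on `ℝⁿ`. -/
noncomputable def uniAct (n : ℕ) (t : ℝ) (x : Fin n → ℝ) : Fin n → ℝ :=
  (NormedSpace.exp (t • jordanX n)).mulVec x

/-- The rational invariants `P₁, …, P_{n-1}` (indexed here by `r : Fin (n-1)`, so that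
`invP n hn r` is `P_{r+1}`): with `R(x) = exp(−(x_{n−1}/xₙ)X)·x` and `Qᵣ(x)` its `r`-th
coordinate, `Pᵣ(x) = xₙ^{n−r−1}·Qᵣ(x)` for `1 ≤ r ≤ n−2` and `P_{n−1}(x) = xₙ`. -/
noncomputable def invP (n : ℕ) (hn : 2 ≤ n) (r : Fin (n - 1)) (x : Fin n → ℝ) : ℝ :=
  if (r : ℕ) = n - 2 then x ⟨n - 1, by omega⟩
  else (x ⟨n - 1, by omega⟩) ^ (n - (r : ℕ) - 2) *
    uniAct n (-(x ⟨n - 2, by omega⟩ / x ⟨n - 1, by omega⟩)) x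
      ⟨(r : ℕ), lt_of_lt_of_le r.isLt (Nat.sub_le n 1)⟩

/-!
On `{xₙ ≠ 0}` the flow at time `t = −x_{n−1}/xₙ` moves `x` to the point `R(x)` of the slice
`{x_{n−1} = 0}`, so an invariant `p` satisfies `p(x) = p(R(x))`. The coordinates of `R(x)` are
`Pᵣ / xₙ^{n−r−1}` for `r ≤ n − 2`, then `0` and `xₙ = P_{n−1}`: rational functions of `P` whose
denominators are powers of `P_{n−1}`. Functions that become polynomials after multiplication by a
power of a fixed polynomial form a ring, so `p ∘ R` is one of them.
-/

open MvPolynomial Finset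

section ClearingDenominators

variable {R τ : Type*} [CommSemiring R]

def IsPolynomialAway (w : MvPolynomial τ R) (f : (τ → R) → R) : Prop :=
  ∃ (k : ℕ) (F : MvPolynomial τ R), ∀ z, eval z w ≠ 0 → eval z w ^ k * f z = eval z F

namespace IsPolynomialAway

variable {w : MvPolynomial τ R} {f g : (τ → R) → R}

theorem of_eval (F : MvPolynomial τ R) : IsPolynomialAway w (fun z => eval z F) :=
  ⟨0, F, fun z _ => by rw [pow_zero, one_mul]⟩

theorem add (hf : IsPolynomialAway w f) (hg : IsPolynomialAway w g) :
    IsPolynomialAway w (fun z => f z + g z) := by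
  obtain ⟨k, F, hF⟩ := hf
  obtain ⟨l, G, hG⟩ := hg
  refine ⟨k + l, w ^ l * F + w ^ k * G, fun z hz => ?_⟩
  simp only [map_add, map_mul, map_pow, ← hF z hz, ← hG z hz]
  ring

theorem mul (hf : IsPolynomialAway w f) (hg : IsPolynomialAway w g) :
    IsPolynomialAway w (fun z => f z * g z) := by
  obtain ⟨k, F, hF⟩ := hf
  obtain ⟨l, G, hG⟩ := hg
  refine ⟨k + l, F * G, fun z hz => ?_⟩
  rw [map_mul, ← hF z hz, ← hG z hz]
  ring

theorem eval_comp {σ : Type*} {y : (τ → R) → σ → R} (hy : ∀ i, IsPolynomialAway w (y · i))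
    (q : MvPolynomial σ R) : IsPolynomialAway w (fun z => eval (y z) q) := by
  induction q using MvPolynomial.induction_on with
  | C a => simpa using of_eval (C a)
  | add p q hp hq => simpa using hp.add hq
  | mul_X p i hp => simpa using hp.mul (hy i)

theorem div_pow {K : Type*} [Field K] {w : MvPolynomial τ K} (F : MvPolynomial τ K) (e : ℕ) :
    IsPolynomialAway w (fun z => eval z F / eval z w ^ e) :=
  ⟨e, F, fun _ hz => mul_div_cancel₀ _ (pow_ne_zero _ hz)⟩

end IsPolynomialAway

end ClearingDenominators

theorem jordanX_mulVec (n : ℕ) (x : Fin n → ℝ) (i : Fin n) :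
    (jordanX n *ᵥ x) i = if h : (i : ℕ) + 1 < n then x ⟨i + 1, h⟩ else 0 := by
  simp only [mulVec, dotProduct, jordanX, of_apply, ite_mul, one_mul, zero_mul]
  split_ifs with h
  · rw [Fintype.sum_eq_single (⟨i + 1, h⟩ : Fin n)
      fun j hj => if_neg fun (e : (i : ℕ) + 1 = j) => hj (Fin.ext e.symm)]
    exact if_pos rfl
  · exact sum_eq_zero fun j _ => if_neg fun (e : (i : ℕ) + 1 = j) => h (e ▸ j.isLt)

theorem jordanX_pow_mulVec (n k : ℕ) (x : Fin n → ℝ) (i : Fin n) :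
    (jordanX n ^ k *ᵥ x) i = if h : (i : ℕ) + k < n then x ⟨i + k, h⟩ else 0 := by
  induction k generalizing x with
  | zero => simp
  | succ k ih =>
    rw [pow_succ, ← mulVec_mulVec, ih]
    simp only [jordanX_mulVec, add_assoc]
    split_ifs <;> first | rfl | omega

theorem jordanX_pow_eq_zero {n k : ℕ} (hk : n ≤ k) : jordanX n ^ k = 0 := by
  refine ext_of_mulVec_single fun j => funext fun i => ?_
  rw [jordanX_pow_mulVec, dif_neg (by omega), zero_mulVec, Pi.zero_apply]

theorem exp_smul_jordanX (n : ℕ) (t : ℝ) :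
    NormedSpace.exp (t • jordanX n) = ∑ k ∈ range n, (t ^ k / k.factorial) • jordanX n ^ k := by
  rw [NormedSpace.exp_eq_tsum ℝ]
  refine (tsum_eq_sum (s := range n) fun k hk => ?_).trans (sum_congr rfl fun k _ => ?_)
  · rw [smul_pow, jordanX_pow_eq_zero (by simpa using hk), smul_zero, smul_zero]
  · rw [smul_pow, smul_smul, div_eq_inv_mul]

theorem uniAct_apply (n : ℕ) (t : ℝ) (x : Fin n → ℝ) (i : Fin n) :
    uniAct n t x i = ∑ k ∈ range n, t ^ k / k.factorial *
      if h : (i : ℕ) + k < n then x ⟨i + k, h⟩ else 0 := by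
  simp only [uniAct, exp_smul_jordanX, sum_mulVec, smul_mulVec, Finset.sum_apply, Pi.smul_apply,
    jordanX_pow_mulVec, smul_eq_mul]

theorem uniAct_last (n : ℕ) (t : ℝ) (x : Fin (n + 1) → ℝ) :
    uniAct (n + 1) t x (Fin.last n) = x (Fin.last n) := by
  rw [uniAct_apply, sum_eq_single 0 (fun k _ hk => by rw [dif_neg (by simp; omega), mul_zero])
    (by simp)]
  simp [Fin.last]

theorem uniAct_castSucc_last (n : ℕ) (t : ℝ) (x : Fin (n + 2) → ℝ) :
    uniAct (n + 2) t x (Fin.last n).castSucc =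
      x (Fin.last n).castSucc + t * x (Fin.last (n + 1)) := by
  rw [uniAct_apply, ← sum_subset (range_subset_range.mpr (show 2 ≤ n + 2 by omega))
    fun k _ hk => by rw [dif_neg (by simp at hk ⊢; omega), mul_zero]]
  simp [sum_range_succ, Fin.last]

/-- The point `R(x)`, written in terms of `z = P(x)`. -/
noncomputable def sliceOfInvP (m : ℕ) (z : Fin (m + 1) → ℝ) : Fin (m + 2) → ℝ :=
  Fin.snoc (Fin.snoc (fun r : Fin m => z r.castSucc / z (Fin.last m) ^ (m - r)) 0)
    (z (Fin.last m))

theorem isPolynomialAway_sliceOfInvP (m : ℕ) (i : Fin (m + 2)) :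
    IsPolynomialAway (X (Fin.last m)) (sliceOfInvP m · i) := by
  induction i using Fin.lastCases with
  | last => simpa [sliceOfInvP] using IsPolynomialAway.of_eval (X (Fin.last m))
  | cast i =>
    induction i using Fin.lastCases with
    | last => simpa [sliceOfInvP] using IsPolynomialAway.of_eval (R := ℝ) 0
    | cast r =>
      simpa [sliceOfInvP] using
        IsPolynomialAway.div_pow (w := X (Fin.last m)) (X r.castSucc) (m - r)

section Slice

variable {m : ℕ} (hn : 2 ≤ m + 2) (x : Fin (m + 2) → ℝ)

theorem invP_last : invP (m + 2) hn (Fin.last m) x = x (Fin.last (m + 1)) :=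
  if_pos rfl

theorem invP_castSucc (r : Fin m) :
    invP (m + 2) hn r.castSucc x = x (Fin.last (m + 1)) ^ (m - r) *
      uniAct (m + 2) (-(x (Fin.last m).castSucc / x (Fin.last (m + 1)))) x r.castSucc.castSucc := by
  rw [invP, if_neg (by simp; omega)]
  congr 2
  simp only [Fin.val_castSucc]
  omega

theorem uniAct_eq_sliceOfInvP (hx : x (Fin.last (m + 1)) ≠ 0) :
    uniAct (m + 2) (-(x (Fin.last m).castSucc / x (Fin.last (m + 1)))) x =
      sliceOfInvP m (fun r => invP (m + 2) hn r x) := by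
  funext i
  induction i using Fin.lastCases with
  | last => simp [sliceOfInvP, uniAct_last, invP_last]
  | cast i =>
    induction i using Fin.lastCases with
    | last =>
      rw [uniAct_castSucc_last]
      simp [sliceOfInvP, div_mul_cancel₀ _ hx]
    | cast r =>
      simp only [sliceOfInvP, invP_castSucc, invP_last, Fin.snoc_castSucc]
      field_simp

end Slice

/-- Every `G`-invariant polynomial `p` on `ℝⁿ`, after multiplication by a
suitable power `xₙᵏ`, is a polynomial in `P₁, …, P_{n−1}` on the open set `{xₙ ≠ 0}`. -/
theorem invariant_polynomial_localized_in_P (n : ℕ) (hn : 2 ≤ n)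
    (p : MvPolynomial (Fin n) ℝ)
    (hp : ∀ (t : ℝ) (x : Fin n → ℝ),
      MvPolynomial.eval (uniAct n t x) p = MvPolynomial.eval x p) :
    ∃ (k : ℕ) (F : MvPolynomial (Fin (n - 1)) ℝ),
      ∀ x : Fin n → ℝ, x ⟨n - 1, by omega⟩ ≠ 0 →
        (x ⟨n - 1, by omega⟩) ^ k * MvPolynomial.eval x p =
          MvPolynomial.eval (fun r => invP n hn r x) F := by
  obtain ⟨m, rfl⟩ : ∃ m, n = m + 2 := ⟨n - 2, by omega⟩
  obtain ⟨k, F, hF⟩ := IsPolynomialAway.eval_comp (isPolynomialAway_sliceOfInvP m) p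
  refine ⟨k, F, fun x hx => ?_⟩
  have hw : eval (fun r => invP (m + 2) hn r x) (X (Fin.last m)) = x (Fin.last (m + 1)) := by
    rw [eval_X, invP_last]
  rw [← hp _ x, uniAct_eq_sliceOfInvP hn x hx, ← hF _ (hw ▸ hx), hw]
  rfl
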